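/- If P₁ and P₂ are π-reversible Markov kernels satisfying the Peskun ordering P₁(x, A∩{x}ᶜ) ≥ P₂(x, A∩{x}ᶜ) for all x ∈ X and all measurable A, then E(P₁,f) ≥ E(P₂,f) for all f ∈ L²₀(π). -/

import Mathlib

set_option linter.unusedSectionVars false
set_option maxHeartbeats 1000000


open MeasureTheory

/-- Dirichlet form `E(P,f) = (1/2) ∫∫ (f(y)-f(x))² π(dx) P(x,dy)`. -/
noncomputable def dirichletForm {X : Type*} [MeasurableSpace X]
    (π : Measure X) (P : X → Measure X) (f : X → ℝ) : ℝ :=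
  (1 / 2) * ∫ x, (∫ y, (f y - f x) ^ 2 ∂(P x)) ∂π

/-- `f ∈ L²₀(π)`: square-integrable and mean zero. -/
def L20 {X : Type*} [MeasurableSpace X] (π : Measure X) (f : X → ℝ) : Prop :=
  Measurable f ∧ Integrable (fun x => f x ^ 2) π ∧ ∫ x, f x ∂π = 0

/-- Variance of a mean-zero function. -/
noncomputable def varPi {X : Type*} [MeasurableSpace X] (π : Measure X) (f : X → ℝ) : ℝ :=
  ∫ x, f x ^ 2 ∂π

/-- Right spectral gap `Gap(P) = inf_{f ∈ L²₀(π)} E(P,f)/Var_π(f)`. -/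
noncomputable def gap {X : Type*} [MeasurableSpace X] (π : Measure X) (P : X → Measure X) : ℝ :=
  sInf {r | ∃ f : X → ℝ, L20 π f ∧ varPi π f ≠ 0 ∧ r = dirichletForm π P f / varPi π f}

/-- π-reversibility of a Markov kernel. -/
def Reversible {X : Type*} [MeasurableSpace X] (π : Measure X) (P : X → Measure X) : Prop :=
  (∀ x, IsProbabilityMeasure (P x)) ∧
  ∀ A B : Set X, MeasurableSet A → MeasurableSet B →
    ∫⁻ x in A, P x B ∂π = ∫⁻ x in B, P x A ∂π

namespace StmtAux

open ENNReal Filter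

variable {X : Type*} [MeasurableSpace X] {π : Measure X} [IsProbabilityMeasure π]
  {P : X → Measure X}


open ENNReal Filter

variable {X : Type*} [MeasurableSpace X] {π : Measure X} [IsProbabilityMeasure π]
  {P : X → Measure X}

lemma lintegral_restrict_add_compl (w : X → ℝ≥0∞) {A : Set X} (hA : MeasurableSet A) :
    (∫⁻ x in A, w x ∂π) + ∫⁻ x in Aᶜ, w x ∂π = ∫⁻ x, w x ∂π := by
  rw [← lintegral_add_measure, Measure.restrict_add_restrict_compl hA]

lemma invariance (hrev : Reversible π P) {B : Set X} (hB : MeasurableSet B) :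
    ∫⁻ x, P x B ∂π = π B := by
  have h := hrev.2 Set.univ B MeasurableSet.univ hB
  rw [Measure.restrict_univ] at h
  rw [h]
  have h1 : ∀ x, P x Set.univ = 1 := fun x => (hrev.1 x).measure_univ
  simp only [h1]
  simp

/-- a measurable minorant with the same integral has the same integral on every
measurable set (when the total integral is finite). -/
lemma setLIntegral_env {u e : X → ℝ≥0∞} (hfin : ∫⁻ x, u x ∂π ≠ ⊤)
    (hle : e ≤ u) (heq : ∫⁻ x, u x ∂π = ∫⁻ x, e x ∂π) {A : Set X} (hA : MeasurableSet A) :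
    ∫⁻ x in A, u x ∂π = ∫⁻ x in A, e x ∂π := by
  have h1 : ∫⁻ x in A, e x ∂π ≤ ∫⁻ x in A, u x ∂π := lintegral_mono hle
  have h2 : ∫⁻ x in Aᶜ, e x ∂π ≤ ∫⁻ x in Aᶜ, u x ∂π := lintegral_mono hle
  have hsum : (∫⁻ x in A, u x ∂π) + ∫⁻ x in Aᶜ, u x ∂π
      = (∫⁻ x in A, e x ∂π) + ∫⁻ x in Aᶜ, e x ∂π := by
    rw [lintegral_restrict_add_compl u hA, lintegral_restrict_add_compl e hA, heq]
  have hcfin : ∫⁻ x in Aᶜ, u x ∂π ≠ ⊤ := by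
    have hh := lintegral_restrict_add_compl (π := π) u hA
    exact ne_top_of_le_ne_top hfin (by rw [← hh]; exact le_add_left le_rfl)
  refine le_antisymm ?_ h1
  have : (∫⁻ x in A, u x ∂π) + ∫⁻ x in Aᶜ, u x ∂π
      ≤ (∫⁻ x in A, e x ∂π) + ∫⁻ x in Aᶜ, u x ∂π := by
    rw [hsum]; exact add_le_add_right h2 _
  exact (ENNReal.add_le_add_iff_right hcfin).mp this

/-- Reversibility forces `x ↦ P x B` to be a.e. measurable. -/
lemma aemeasurable_kernel (hrev : Reversible π P) {B : Set X} (hB : MeasurableSet B) :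
    AEMeasurable (fun x => P x B) π := by
  set u : X → ℝ≥0∞ := fun x => P x B with hu
  set v : X → ℝ≥0∞ := fun x => P x Bᶜ with hv
  have hub : ∀ x, u x ≤ 1 := fun x => by haveI := hrev.1 x; exact prob_le_one
  have hvb : ∀ x, v x ≤ 1 := fun x => by haveI := hrev.1 x; exact prob_le_one
  have hufin : ∫⁻ x, u x ∂π ≠ ⊤ := by
    refine ne_top_of_le_ne_top (by simp : (1 : ℝ≥0∞) ≠ ⊤) ?_
    calc ∫⁻ x, u x ∂π ≤ ∫⁻ _, 1 ∂π := lintegral_mono hub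
    _ = 1 := by simp
  have hvfin : ∫⁻ x, v x ∂π ≠ ⊤ := by
    refine ne_top_of_le_ne_top (by simp : (1 : ℝ≥0∞) ≠ ⊤) ?_
    calc ∫⁻ x, v x ∂π ≤ ∫⁻ _, 1 ∂π := lintegral_mono hvb
    _ = 1 := by simp
  obtain ⟨e, hem, hele, heeq⟩ := exists_measurable_le_lintegral_eq π u
  obtain ⟨e', he'm, he'le, he'eq⟩ := exists_measurable_le_lintegral_eq π v
  -- for every measurable A, ∫_A (e + e') = π A
  have key : ∀ A : Set X, MeasurableSet A →
      (∫⁻ x in A, e x ∂π) + ∫⁻ x in A, e' x ∂π = π A := by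
    intro A hA
    rw [← setLIntegral_env hufin hele heeq hA, ← setLIntegral_env hvfin he'le he'eq hA]
    rw [hrev.2 A B hA hB, hrev.2 A Bᶜ hA hB.compl]
    rw [show (fun x => P x A) = fun x => P x A from rfl]
    rw [lintegral_restrict_add_compl (fun x => P x A) hB]
    exact invariance hrev hA
  have hone : (fun x => e x + e' x) =ᵐ[π] fun _ => (1 : ℝ≥0∞) := by
    refine ae_eq_of_forall_setLIntegral_eq_of_sigmaFinite (hem.add he'm) measurable_const ?_
    intro A hA _
    rw [lintegral_add_left hem, key A hA]
    simp
  -- pointwise: u x + v x = 1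
  have huv : ∀ x, u x + v x = 1 := by
    intro x
    have := measure_add_measure_compl (μ := P x) hB
    rw [(hrev.1 x).measure_univ] at this
    exact this
  have hae : u =ᵐ[π] e := by
    filter_upwards [hone] with x hx
    -- e x + e' x = 1, e' x ≤ v x, u x + v x = 1, e x ≤ u x  ⇒ u x = e x
    have h1 : u x + e' x ≤ 1 := by
      rw [← huv x]; exact add_le_add_right (he'le x) _
    have h2 : u x ≤ e x := by
      have he'top : e' x ≠ ⊤ := by
        intro htop; rw [htop] at hx; simp at hx
      have : u x ≤ 1 - e' x := ENNReal.le_sub_of_add_le_right he'top h1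
      have hex : e x = 1 - e' x := by
        rw [← hx]; exact (ENNReal.add_sub_cancel_right he'top).symm
      rwa [← hex] at this
    exact le_antisymm h2 (hele x)
  exact ⟨e, hem, hae⟩




lemma aemeasurable_phi_lintegral (hrev : Reversible π P) {f : X → ℝ} (hf : Measurable f)
    (φ : ℝ → ℝ → ℝ≥0∞) (hφ : Continuous fun p : ℝ × ℝ => φ p.1 p.2)
    (hφfin : ∀ s t, φ s t ≠ ⊤) :
    AEMeasurable (fun x => ∫⁻ y, φ (f x) (f y) ∂(P x)) π := by
  classical
  set s : ℕ → SimpleFunc X ℝ := fun n => SimpleFunc.approxOn f hf Set.univ 0 (Set.mem_univ 0) n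
    with hs
  have hs_tend : ∀ y, Tendsto (fun n => s n y) atTop (nhds (f y)) := by
    intro y
    exact SimpleFunc.tendsto_approxOn hf (Set.mem_univ 0) (by simp)
  -- continuity facts
  have hφm1 : ∀ a : ℝ, ∀ M : ℕ, Measurable (fun t : ℝ => min (φ a t) (M : ℝ≥0∞)) := by
    intro a M
    exact ((hφ.comp (continuous_const.prodMk continuous_id)).min continuous_const).measurable
  have hφm2 : ∀ v : ℝ, ∀ M : ℕ, Measurable (fun a : ℝ => min (φ a v) (M : ℝ≥0∞)) := by
    intro v M
    exact ((hφ.comp (continuous_id.prodMk continuous_const)).min continuous_const).measurable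
  -- truncated approximations
  set LM : ℕ → X → ℝ≥0∞ := fun M x => ∫⁻ y, min (φ (f x) (f y)) (M : ℝ≥0∞) ∂(P x) with hLMdef
  set LMn : ℕ → ℕ → X → ℝ≥0∞ :=
    fun M n x => ∫⁻ y, min (φ (s n x) (s n y)) (M : ℝ≥0∞) ∂(P x) with hLMndef
  have hLMn : ∀ M n, AEMeasurable (LMn M n) π := by
    intro M n
    have hrepr : LMn M n = fun x => ∑ v ∈ (s n).range,
        min (φ (s n x) v) (M : ℝ≥0∞) * P x ((s n) ⁻¹' {v}) := by
      funext x
      simp only [hLMndef]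
      have h1 : (∫⁻ y, min (φ (s n x) (s n y)) (M : ℝ≥0∞) ∂(P x))
          = ∫⁻ y, ((s n).map (fun v => min (φ (s n x) v) (M : ℝ≥0∞))) y ∂(P x) :=
        lintegral_congr fun y => by simp
      rw [h1, SimpleFunc.lintegral_eq_lintegral, SimpleFunc.map_lintegral]
    rw [hrepr]
    refine Finset.aemeasurable_fun_sum _ ?_
    intro v _
    refine AEMeasurable.mul ?_ ?_
    · exact ((hφm2 v M).comp (s n).measurable).aemeasurable
    · exact aemeasurable_kernel hrev ((s n).measurable (measurableSet_singleton v))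
  have htend : ∀ M x, Tendsto (fun n => LMn M n x) atTop (nhds (LM M x)) := by
    intro M x
    haveI := hrev.1 x
    refine tendsto_lintegral_of_dominated_convergence (fun _ => (M : ℝ≥0∞)) ?_ ?_ ?_ ?_
    · intro n
      exact ((hφm1 (s n x) M).comp (s n).measurable)
    · intro n
      exact Eventually.of_forall fun y => min_le_right _ _
    · simp
    · refine Eventually.of_forall fun y => ?_
      have h1 : Tendsto (fun n => (s n x, s n y)) atTop (nhds (f x, f y)) :=
        (hs_tend x).prodMk_nhds (hs_tend y)
      exact (((hφ.tendsto (f x, f y)).comp h1).min tendsto_const_nhds)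
  have hLM : ∀ M, AEMeasurable (LM M) π := by
    intro M
    set g : ℕ → X → ℝ≥0∞ := fun n => (hLMn M n).mk _ with hg
    have hgm : ∀ n, Measurable (g n) := fun n => (hLMn M n).measurable_mk
    have hae : LM M =ᵐ[π] fun x => liminf (fun n => g n x) atTop := by
      have hall := ae_all_iff.mpr fun n => (hLMn M n).ae_eq_mk
      filter_upwards [hall] with x hx
      have ht : Tendsto (fun n => LMn M n x) atTop (nhds (LM M x)) := htend M x
      have heq : (fun n => LMn M n x) = fun n => g n x := funext fun n => hx n
      rw [← ht.liminf_eq, heq]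
    exact ((Measurable.liminf hgm).aemeasurable).congr hae.symm
  have hrepr2 : (fun x => ∫⁻ y, φ (f x) (f y) ∂(P x)) = fun x => ⨆ M : ℕ, LM M x := by
    funext x
    have hmono : Monotone fun (M : ℕ) (y : X) => min (φ (f x) (f y)) (M : ℝ≥0∞) := by
      intro a b hab y
      exact min_le_min le_rfl (by exact_mod_cast Nat.cast_le.mpr hab)
    have hmeas : ∀ M : ℕ, Measurable (fun y : X => min (φ (f x) (f y)) (M : ℝ≥0∞)) :=
      fun M => (hφm1 (f x) M).comp hf
    rw [hLMdef]
    rw [← lintegral_iSup hmeas hmono]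
    refine lintegral_congr fun y => ?_
    refine le_antisymm ?_ (iSup_le fun M => min_le_left _ _)
    obtain ⟨n, hn⟩ := ENNReal.exists_nat_gt (hφfin (f x) (f y))
    exact le_iSup_of_le n (by rw [min_eq_left hn.le])
  rw [hrepr2]
  exact AEMeasurable.iSup fun M => hLM M




lemma lintegral_Th_le (hrev : Reversible π P) {h : X → ℝ≥0∞} (hh : Measurable h) :
    ∫⁻ x, ∫⁻ y, h y ∂(P x) ∂π ≤ ∫⁻ y, h y ∂π := by
  classical
  have hrepr : ∀ x, ∫⁻ y, h y ∂(P x) = ⨆ n, (SimpleFunc.eapprox h n).lintegral (P x) :=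
    fun x => lintegral_eq_iSup_eapprox_lintegral hh
  set T : ℕ → X → ℝ≥0∞ := fun n x => (SimpleFunc.eapprox h n).lintegral (P x) with hT
  have hTsum : ∀ n, T n = fun x => ∑ v ∈ (SimpleFunc.eapprox h n).range,
      v * P x ((SimpleFunc.eapprox h n) ⁻¹' {v}) := by
    intro n; funext x; simp [hT, SimpleFunc.lintegral]
  have hTm : ∀ n, AEMeasurable (T n) π := by
    intro n
    rw [hTsum n]
    exact Finset.aemeasurable_fun_sum _ fun v _ =>
      (aemeasurable_kernel hrev
        ((SimpleFunc.eapprox h n).measurable (measurableSet_singleton v))).const_mul v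
  have hmono : ∀ x, Monotone fun n => T n x := fun x a b hab =>
    SimpleFunc.lintegral_mono (SimpleFunc.monotone_eapprox h hab) le_rfl
  calc ∫⁻ x, ∫⁻ y, h y ∂(P x) ∂π = ∫⁻ x, ⨆ n, T n x ∂π := lintegral_congr hrepr
    _ = ⨆ n, ∫⁻ x, T n x ∂π :=
        lintegral_iSup' hTm (Eventually.of_forall fun x => hmono x)
    _ ≤ ∫⁻ y, h y ∂π := by
        refine iSup_le fun n => ?_
        have : ∫⁻ x, T n x ∂π = ∑ v ∈ (SimpleFunc.eapprox h n).range,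
            v * π ((SimpleFunc.eapprox h n) ⁻¹' {v}) := by
          rw [hTsum n]
          rw [lintegral_finset_sum' _ fun v _ =>
            (aemeasurable_kernel hrev
              ((SimpleFunc.eapprox h n).measurable (measurableSet_singleton v))).const_mul v]
          refine Finset.sum_congr rfl fun v _ => ?_
          rw [lintegral_const_mul'' v (aemeasurable_kernel hrev
            ((SimpleFunc.eapprox h n).measurable (measurableSet_singleton v)))]
          rw [invariance hrev ((SimpleFunc.eapprox h n).measurable (measurableSet_singleton v))]
        rw [this]
        have h2 : ∑ v ∈ (SimpleFunc.eapprox h n).range,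
            v * π ((SimpleFunc.eapprox h n) ⁻¹' {v}) = (SimpleFunc.eapprox h n).lintegral π := by
          simp [SimpleFunc.lintegral]
        rw [h2, ← SimpleFunc.lintegral_eq_lintegral]
        exact lintegral_mono fun y => by
          simpa using le_iSup_of_le n le_rfl |>.trans_eq (SimpleFunc.iSup_eapprox_apply hh y)

lemma peskun_pointwise {P₁ P₂ : X → Measure X}
    (hPeskun : ∀ x : X, ∀ A : Set X, MeasurableSet A →
      P₂ x (A ∩ {x}ᶜ) ≤ P₁ x (A ∩ {x}ᶜ))
    {f : X → ℝ} (hf : Measurable f) (x : X) :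
    ∫⁻ y, ENNReal.ofReal ((f y - f x) ^ 2) ∂(P₂ x)
      ≤ ∫⁻ y, ENNReal.ofReal ((f y - f x) ^ 2) ∂(P₁ x) := by
  set w : X → ℝ≥0∞ := fun y => ENNReal.ofReal ((f y - f x) ^ 2) with hw
  have hle : P₂ x ≤ P₁ x + (P₂ x).restrict {x} := by
    refine Measure.le_iff.mpr fun A hA => ?_
    have h1 : P₂ x A ≤ P₂ x (A ∩ {x}ᶜ) + P₂ x (A ∩ {x}) := by
      refine le_trans (measure_mono ?_) (measure_union_le _ _)
      intro y hy
      by_cases h : y = x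
      · exact Or.inr ⟨hy, h⟩
      · exact Or.inl ⟨hy, h⟩
    calc P₂ x A ≤ P₂ x (A ∩ {x}ᶜ) + P₂ x (A ∩ {x}) := h1
      _ ≤ P₁ x (A ∩ {x}ᶜ) + P₂ x (A ∩ {x}) := add_le_add_left (hPeskun x A hA) _
      _ ≤ P₁ x A + ((P₂ x).restrict {x}) A := by
          refine add_le_add (measure_mono Set.inter_subset_left) ?_
          rw [Measure.restrict_apply hA]
      _ = (P₁ x + (P₂ x).restrict {x}) A := (Measure.add_apply _ _ _).symm
  calc ∫⁻ y, w y ∂(P₂ x) ≤ ∫⁻ y, w y ∂(P₁ x + (P₂ x).restrict {x}) :=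
        lintegral_mono' hle le_rfl
    _ = (∫⁻ y, w y ∂(P₁ x)) + ∫⁻ y, w y ∂((P₂ x).restrict {x}) := lintegral_add_measure _ _ _
    _ = ∫⁻ y, w y ∂(P₁ x) := by
        have hz : ∫⁻ y, w y ∂((P₂ x).restrict {x}) = 0 := by
          have hS : MeasurableSet {y | f y ≠ f x} :=
            (hf (measurableSet_singleton (f x))).compl
          have hnull : ((P₂ x).restrict {x}) {y | f y ≠ f x} = 0 := by
            rw [Measure.restrict_apply hS]
            have : {y | f y ≠ f x} ∩ {x} = (∅ : Set X) := by
              ext y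
              simp only [Set.mem_inter_iff, Set.mem_setOf_eq, Set.mem_singleton_iff,
                Set.mem_empty_iff_false, iff_false]
              rintro ⟨hne, rfl⟩
              exact hne rfl
            rw [this, measure_empty]
          have hae : w =ᵐ[(P₂ x).restrict {x}] 0 := by
            refine measure_mono_null ?_ hnull
            intro y hy
            simp only [Set.mem_setOf_eq]
            intro hfy
            apply hy
            simp [hw, hfy]
          rw [lintegral_congr_ae hae]
          simp
        rw [hz, add_zero]

lemma key (hrev : Reversible π P) {f : X → ℝ} (hf : Measurable f)
    (hf2 : Integrable (fun x => f x ^ 2) π) :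
    AEMeasurable (fun x => ∫⁻ y, ENNReal.ofReal ((f y - f x) ^ 2) ∂(P x)) π ∧
    (∫⁻ x, ∫⁻ y, ENNReal.ofReal ((f y - f x) ^ 2) ∂(P x) ∂π) ≠ ⊤ ∧
    ∫ x, (∫ y, (f y - f x) ^ 2 ∂(P x)) ∂π
      = (∫⁻ x, ∫⁻ y, ENNReal.ofReal ((f y - f x) ^ 2) ∂(P x) ∂π).toReal := by
  have hL : AEMeasurable (fun x => ∫⁻ y, ENNReal.ofReal ((f y - f x) ^ 2) ∂(P x)) π := by
    have := aemeasurable_phi_lintegral hrev hf (fun s t => ENNReal.ofReal ((t - s) ^ 2))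
      (ENNReal.continuous_ofReal.comp ((continuous_snd.sub continuous_fst).pow 2))
      (fun s t => ENNReal.ofReal_ne_top)
    exact this
  have hg : Measurable fun y : X => ENNReal.ofReal (f y ^ 2) :=
    ENNReal.measurable_ofReal.comp ((hf.pow_const 2))
  have hThm : AEMeasurable (fun x => ∫⁻ y, ENNReal.ofReal (f y ^ 2) ∂(P x)) π := by
    have := aemeasurable_phi_lintegral hrev hf (fun _ t => ENNReal.ofReal (t ^ 2))
      (ENNReal.continuous_ofReal.comp (continuous_snd.pow 2))
      (fun s t => ENNReal.ofReal_ne_top)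
    exact this
  have hsqfin : ∫⁻ x, ENNReal.ofReal (f x ^ 2) ∂π ≠ ⊤ := by
    have h1 := hf2.hasFiniteIntegral
    rw [HasFiniteIntegral] at h1
    have h2 : ∀ x, (‖f x ^ 2‖₊ : ℝ≥0∞) = ENNReal.ofReal (f x ^ 2) := fun x =>
      Real.enorm_eq_ofReal (sq_nonneg _)
    refine ne_of_lt ?_
    calc ∫⁻ x, ENNReal.ofReal (f x ^ 2) ∂π = ∫⁻ x, (‖f x ^ 2‖₊ : ℝ≥0∞) ∂π :=
          lintegral_congr fun x => (h2 x).symm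
      _ < ⊤ := h1
  have hbound : ∀ x, (∫⁻ y, ENNReal.ofReal ((f y - f x) ^ 2) ∂(P x))
      ≤ 2 * (∫⁻ y, ENNReal.ofReal (f y ^ 2) ∂(P x)) + 2 * ENNReal.ofReal (f x ^ 2) := by
    intro x
    haveI := hrev.1 x
    have hptw : ∀ y, ENNReal.ofReal ((f y - f x) ^ 2)
        ≤ 2 * ENNReal.ofReal (f y ^ 2) + 2 * ENNReal.ofReal (f x ^ 2) := by
      intro y
      have hq : (f y - f x) ^ 2 ≤ 2 * f y ^ 2 + 2 * f x ^ 2 := by nlinarith [sq_nonneg (f y + f x)]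
      calc ENNReal.ofReal ((f y - f x) ^ 2)
          ≤ ENNReal.ofReal (2 * f y ^ 2 + 2 * f x ^ 2) := ENNReal.ofReal_le_ofReal hq
        _ = ENNReal.ofReal (2 * f y ^ 2) + ENNReal.ofReal (2 * f x ^ 2) :=
            ENNReal.ofReal_add (by positivity) (by positivity)
        _ = 2 * ENNReal.ofReal (f y ^ 2) + 2 * ENNReal.ofReal (f x ^ 2) := by
            rw [ENNReal.ofReal_mul zero_le_two, ENNReal.ofReal_mul zero_le_two]
            norm_num
    calc (∫⁻ y, ENNReal.ofReal ((f y - f x) ^ 2) ∂(P x))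
        ≤ ∫⁻ y, (2 * ENNReal.ofReal (f y ^ 2) + 2 * ENNReal.ofReal (f x ^ 2)) ∂(P x) :=
          lintegral_mono hptw
      _ = 2 * (∫⁻ y, ENNReal.ofReal (f y ^ 2) ∂(P x)) + 2 * ENNReal.ofReal (f x ^ 2) := by
          rw [lintegral_add_right _ measurable_const, lintegral_const_mul 2 hg, lintegral_const]
          rw [measure_univ, mul_one]
  have hfin : (∫⁻ x, ∫⁻ y, ENNReal.ofReal ((f y - f x) ^ 2) ∂(P x) ∂π) ≠ ⊤ := by
    refine ne_of_lt (lt_of_le_of_lt (lintegral_mono hbound) ?_)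
    have hsplit : ∫⁻ x, (2 * (∫⁻ y, ENNReal.ofReal (f y ^ 2) ∂(P x))
        + 2 * ENNReal.ofReal (f x ^ 2)) ∂π
        = 2 * (∫⁻ x, ∫⁻ y, ENNReal.ofReal (f y ^ 2) ∂(P x) ∂π)
          + 2 * ∫⁻ x, ENNReal.ofReal (f x ^ 2) ∂π := by
      rw [lintegral_add_left' (hThm.const_mul 2), lintegral_const_mul'' 2 hThm,
        lintegral_const_mul 2 hg]
    rw [hsplit]
    have hTh_le := lintegral_Th_le hrev hg
    refine ENNReal.add_lt_top.mpr ⟨?_, ?_⟩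
    · exact ENNReal.mul_lt_top (by simp) (lt_of_le_of_lt hTh_le hsqfin.lt_top)
    · exact ENNReal.mul_lt_top (by simp) hsqfin.lt_top
  refine ⟨hL, hfin, ?_⟩
  have hinner : ∀ x, ∫ y, (f y - f x) ^ 2 ∂(P x)
      = (∫⁻ y, ENNReal.ofReal ((f y - f x) ^ 2) ∂(P x)).toReal := by
    intro x
    refine integral_eq_lintegral_of_nonneg_ae (Eventually.of_forall fun y => sq_nonneg _) ?_
    exact (((hf.sub measurable_const).pow_const 2)).aestronglyMeasurable
  have houter : ∫ x, ((∫⁻ y, ENNReal.ofReal ((f y - f x) ^ 2) ∂(P x)).toReal) ∂π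
      = (∫⁻ x, ∫⁻ y, ENNReal.ofReal ((f y - f x) ^ 2) ∂(P x) ∂π).toReal := by
    rw [integral_eq_lintegral_of_nonneg_ae (Eventually.of_forall fun x => ENNReal.toReal_nonneg)
      (ENNReal.measurable_toReal.comp_aemeasurable hL).aestronglyMeasurable]
    congr 1
    refine lintegral_congr_ae ?_
    filter_upwards [ae_lt_top' hL hfin] with x hx
    exact ENNReal.ofReal_toReal hx.ne
  rw [← houter]
  exact integral_congr_ae (Eventually.of_forall hinner)


end StmtAux

/-- Peskun ordering implies ordering of Dirichlet forms. -/
theorem stmt1 {X : Type*} [MeasurableSpace X] (π : Measure X) [IsProbabilityMeasure π]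
    (P₁ P₂ : X → Measure X) (hrev₁ : Reversible π P₁) (hrev₂ : Reversible π P₂)
    (hPeskun : ∀ x : X, ∀ A : Set X, MeasurableSet A →
      P₂ x (A ∩ {x}ᶜ) ≤ P₁ x (A ∩ {x}ᶜ)) :
    ∀ f : X → ℝ, L20 π f → dirichletForm π P₂ f ≤ dirichletForm π P₁ f := by
  intro f hfL
  obtain ⟨hf, hf2, -⟩ := hfL
  have k1 := StmtAux.key hrev₁ hf hf2
  have k2 := StmtAux.key hrev₂ hf hf2
  have hmono : (∫⁻ x, ∫⁻ y, ENNReal.ofReal ((f y - f x) ^ 2) ∂(P₂ x) ∂π)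
      ≤ ∫⁻ x, ∫⁻ y, ENNReal.ofReal ((f y - f x) ^ 2) ∂(P₁ x) ∂π :=
    lintegral_mono fun x => StmtAux.peskun_pointwise hPeskun hf x
  unfold dirichletForm
  rw [k2.2.2, k1.2.2]
  have hle := ENNReal.toReal_mono k1.2.1 hmono
  linarith
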